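/- arXiv:1010.1184 — 2 statements merged into one kernel-verified Lean document; each statement's English description precedes it below -/
import Mathlib

section
/- Let N ≥ 3 and let A be a Ptolemy diagram of the N-gon. Then nc A is also a Ptolemy diagram. -/
/-- An edge of the `N`-gon: a set `{v, v+1}` of two neighbouring vertices. -/
def IsEdge (N : ℕ) (e : Finset (ZMod N)) : Prop :=
  ∃ v : ZMod N, e = {v, v + 1}

/-- A diagonal of the `N`-gon: a 2-element subset of `ZMod N` which is not an edge. -/
def IsDiag (N : ℕ) (d : Finset (ZMod N)) : Prop :=
  d.card = 2 ∧ ¬ IsEdge N d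

/-- `ArcBtw N a c b` means that `c` lies strictly on the arc from `a` to `b`
(going around the polygon in the positive direction). -/
def ArcBtw (N : ℕ) (a c b : ZMod N) : Prop :=
  0 < (c - a).val ∧ (c - a).val < (b - a).val

/-- Two diagonals cross if their endpoints are pairwise distinct and occur in the
cyclic order `a₁, b₁, a₂, b₂` around the polygon: i.e. exactly one of `b₁, b₂` lies
strictly on each of the two arcs determined by `a₁` and `a₂`. -/
def Cross (N : ℕ) (d e : Finset (ZMod N)) : Prop :=
  ∃ a₁ a₂ b₁ b₂ : ZMod N, d = {a₁, a₂} ∧ e = {b₁, b₂} ∧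
    ArcBtw N a₁ b₁ a₂ ∧ ArcBtw N a₂ b₂ a₁

/-- `nc N A` is the set of all diagonals of the `N`-gon crossing no diagonal in `A`. -/
def nc (N : ℕ) (A : Set (Finset (ZMod N))) : Set (Finset (ZMod N)) :=
  { d | IsDiag N d ∧ ∀ e ∈ A, ¬ Cross N d e }

/-- A Ptolemy diagram: a set of diagonals such that whenever `{a₁,a₂}` and `{b₁,b₂}`
are crossing diagonals in `A`, each of the four connecting sets which is a diagonal
also belongs to `A`. -/
def IsPtolemy (N : ℕ) (A : Set (Finset (ZMod N))) : Prop :=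
  (∀ d ∈ A, IsDiag N d) ∧
  ∀ a₁ a₂ b₁ b₂ : ZMod N,
    ({a₁, a₂} : Finset (ZMod N)) ∈ A → ({b₁, b₂} : Finset (ZMod N)) ∈ A →
    Cross N {a₁, a₂} {b₁, b₂} →
    ∀ i ∈ ({a₁, a₂} : Finset (ZMod N)), ∀ j ∈ ({b₁, b₂} : Finset (ZMod N)),
      IsDiag N {i, j} → ({i, j} : Finset (ZMod N)) ∈ A

variable {N : ℕ} [NeZero N]

lemma val_sub_eq (o p q : ZMod N) :
    (q - p).val = if (p - o).val ≤ (q - o).val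
      then (q - o).val - (p - o).val
      else N - ((p - o).val - (q - o).val) := by
  have hp : (((p - o).val : ℕ) : ZMod N) = p - o := by simp [ZMod.natCast_val, ZMod.cast_id]
  have hq : (((q - o).val : ℕ) : ZMod N) = q - o := by simp [ZMod.natCast_val, ZMod.cast_id]
  have hpl : (p - o).val < N := ZMod.val_lt _
  have hql : (q - o).val < N := ZMod.val_lt _
  split_ifs with h
  · have key : q - p = (((q - o).val - (p - o).val : ℕ) : ZMod N) := by
      rw [Nat.cast_sub h, hp, hq]; ring
    rw [key, ZMod.val_cast_of_lt (by omega)]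
  · have key : q - p = ((N - ((p - o).val - (q - o).val) : ℕ) : ZMod N) := by
      rw [Nat.cast_sub (by omega), Nat.cast_sub (by omega), hp, hq, ZMod.natCast_self]
      ring
    rw [key, ZMod.val_cast_of_lt (by omega)]

lemma arcBtw_iff (o x c y : ZMod N) :
    ArcBtw N x c y ↔
      0 < (if (x - o).val ≤ (c - o).val then (c - o).val - (x - o).val
            else N - ((x - o).val - (c - o).val)) ∧
      (if (x - o).val ≤ (c - o).val then (c - o).val - (x - o).val
            else N - ((x - o).val - (c - o).val)) <
      (if (x - o).val ≤ (y - o).val then (y - o).val - (x - o).val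
            else N - ((x - o).val - (y - o).val)) := by
  unfold ArcBtw
  rw [val_sub_eq o x c, val_sub_eq o x y]

lemma crossA (o x₁ x₂ y₁ y₂ : ZMod N)
    (h1 : (x₁ - o).val < (y₁ - o).val) (h2 : (y₁ - o).val < (x₂ - o).val)
    (h3 : (x₂ - o).val < (y₂ - o).val) :
    Cross N {x₁, x₂} {y₁, y₂} := by
  have l1 : (x₁ - o).val < N := ZMod.val_lt _
  have l2 : (x₂ - o).val < N := ZMod.val_lt _
  have l3 : (y₁ - o).val < N := ZMod.val_lt _
  have l4 : (y₂ - o).val < N := ZMod.val_lt _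
  refine ⟨x₁, x₂, y₁, y₂, rfl, rfl, ?_, ?_⟩ <;> rw [arcBtw_iff o] <;> split_ifs <;> omega

lemma crossB (o x₁ x₂ y₁ y₂ : ZMod N)
    (h1 : (y₂ - o).val < (x₁ - o).val) (h2 : (x₁ - o).val < (y₁ - o).val)
    (h3 : (y₁ - o).val < (x₂ - o).val) :
    Cross N {x₁, x₂} {y₁, y₂} := by
  have l1 : (x₁ - o).val < N := ZMod.val_lt _
  have l2 : (x₂ - o).val < N := ZMod.val_lt _
  have l3 : (y₁ - o).val < N := ZMod.val_lt _
  have l4 : (y₂ - o).val < N := ZMod.val_lt _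
  refine ⟨x₁, x₂, y₁, y₂, rfl, rfl, ?_, ?_⟩ <;> rw [arcBtw_iff o] <;> split_ifs <;> omega

lemma pair_eq_cases {α : Type*} [DecidableEq α] {a b c d : α}
    (h : ({a, b} : Finset α) = {c, d}) : (a = c ∧ b = d) ∨ (a = d ∧ b = c) := by
  have ha : a ∈ ({c, d} : Finset α) := h ▸ (by simp)
  have hb : b ∈ ({c, d} : Finset α) := h ▸ (by simp)
  have hc : c ∈ ({a, b} : Finset α) := h.symm ▸ (by simp)
  have hd : d ∈ ({a, b} : Finset α) := h.symm ▸ (by simp)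
  simp only [Finset.mem_insert, Finset.mem_singleton] at ha hb hc hd
  rcases ha with rfl | rfl <;> rcases hb with rfl | rfl <;> tauto

lemma core (o α₂ β₁ β₂ c₁ c₂ d₁ d₂ : ZMod N)
    (hB1 : 0 < (β₁ - o).val) (h1 : (β₁ - o).val < (α₂ - o).val)
    (h2 : (α₂ - o).val < (β₂ - o).val)
    (hc₁ : c₁ = o ∨ c₁ = α₂) (hc₂ : c₂ = β₁ ∨ c₂ = β₂)
    (g1 : ArcBtw N c₁ d₁ c₂) (g2 : ArcBtw N c₂ d₂ c₁) :
    Cross N {o, α₂} {d₁, d₂} ∨ Cross N {β₁, β₂} {d₁, d₂} := by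
  have h0 : (o - o).val = 0 := by simp
  have lB1 : (β₁ - o).val < N := ZMod.val_lt _
  have lB2 : (β₂ - o).val < N := ZMod.val_lt _
  have lA2 : (α₂ - o).val < N := ZMod.val_lt _
  have lD1 : (d₁ - o).val < N := ZMod.val_lt _
  have lD2 : (d₂ - o).val < N := ZMod.val_lt _
  rw [arcBtw_iff o] at g1 g2
  rcases hc₁ with hcc | hcc <;> rcases hc₂ with hcc' | hcc' <;> rw [hcc, hcc'] at g1 g2
  · -- c₁ = o, c₂ = β₁
    have k : 0 < (d₁ - o).val ∧ (d₁ - o).val < (β₁ - o).val ∧ (β₁ - o).val < (d₂ - o).val := by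
      split_ifs at g1 g2 <;> omega
    rcases lt_or_ge (d₂ - o).val (β₂ - o).val with h | h
    · right
      rw [Finset.pair_comm d₁ d₂]
      exact crossB o β₁ β₂ d₂ d₁ (by omega) (by omega) (by omega)
    · left
      exact crossA o o α₂ d₁ d₂ (by omega) (by omega) (by omega)
  · -- c₁ = o, c₂ = β₂
    have k : 0 < (d₁ - o).val ∧ (d₁ - o).val < (β₂ - o).val ∧ (β₂ - o).val < (d₂ - o).val := by
      split_ifs at g1 g2 <;> omega
    rcases lt_or_ge (d₁ - o).val (α₂ - o).val with h | h
    · left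
      exact crossA o o α₂ d₁ d₂ (by omega) (by omega) (by omega)
    · right
      exact crossA o β₁ β₂ d₁ d₂ (by omega) (by omega) (by omega)
  · -- c₁ = α₂, c₂ = β₁
    have k : (β₁ - o).val < (d₂ - o).val ∧ (d₂ - o).val < (α₂ - o).val ∧
        ((α₂ - o).val < (d₁ - o).val ∨ (d₁ - o).val < (β₁ - o).val) := by
      split_ifs at g1 g2 <;> omega
    rcases k.2.2 with h | h
    · left
      rw [Finset.pair_comm d₁ d₂]
      exact crossA o o α₂ d₂ d₁ (by omega) (by omega) (by omega)
    · right
      rw [Finset.pair_comm d₁ d₂]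
      exact crossB o β₁ β₂ d₂ d₁ (by omega) (by omega) (by omega)
  · -- c₁ = α₂, c₂ = β₂
    have k : (α₂ - o).val < (d₁ - o).val ∧ (d₁ - o).val < (β₂ - o).val ∧
        ((β₂ - o).val < (d₂ - o).val ∨ (d₂ - o).val < (α₂ - o).val) := by
      split_ifs at g1 g2 <;> omega
    rcases k.2.2 with h | h
    · right
      exact crossA o β₁ β₂ d₁ d₂ (by omega) (by omega) (by omega)
    · rcases lt_or_ge (d₂ - o).val (β₁ - o).val with h' | h'
      · right
        exact crossB o β₁ β₂ d₁ d₂ (by omega) (by omega) (by omega)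
      · left
        rw [Finset.pair_comm d₁ d₂]
        exact crossA o o α₂ d₂ d₁ (by omega) (by omega) (by omega)


/-- If `A` is a Ptolemy diagram of the `N`-gon (`N ≥ 3`), then so is `nc A`. -/
theorem isPtolemy_nc {N : ℕ} (hN : 3 ≤ N)
    (A : Set (Finset (ZMod N))) (hA : IsPtolemy N A) :
    IsPtolemy N (nc N A) := by
  haveI : NeZero N := ⟨by omega⟩
  constructor
  · intro d hd
    exact hd.1
  · intro a₁ a₂ b₁ b₂ ha hb hcr i hi j hj hij
    obtain ⟨α₁, α₂, β₁, β₂, hAeq, hBeq, h1, h2⟩ := hcr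
    rw [arcBtw_iff α₁] at h1 h2
    have h0 : (α₁ - α₁).val = 0 := by simp
    have lB1 : (β₁ - α₁).val < N := ZMod.val_lt _
    have lB2 : (β₂ - α₁).val < N := ZMod.val_lt _
    have lA2 : (α₂ - α₁).val < N := ZMod.val_lt _
    have key : 0 < (β₁ - α₁).val ∧ (β₁ - α₁).val < (α₂ - α₁).val ∧
        (α₂ - α₁).val < (β₂ - α₁).val := by
      split_ifs at h1 h2 <;> omega
    rw [hAeq] at hi
    rw [hBeq] at hj
    simp only [Finset.mem_insert, Finset.mem_singleton] at hi hj
    refine ⟨hij, ?_⟩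
    intro e he hce
    obtain ⟨c₁, c₂, d₁, d₂, hceq, heeq, g1, g2⟩ := hce
    have main : Cross N {α₁, α₂} {d₁, d₂} ∨ Cross N {β₁, β₂} {d₁, d₂} := by
      rcases pair_eq_cases hceq with ⟨e1, e2⟩ | ⟨e1, e2⟩
      · have hc1 : c₁ = α₁ ∨ c₁ = α₂ := by rw [← e1]; exact hi
        have hc2 : c₂ = β₁ ∨ c₂ = β₂ := by rw [← e2]; exact hj
        exact core α₁ α₂ β₁ β₂ c₁ c₂ d₁ d₂ key.1 key.2.1 key.2.2 hc1 hc2 g1 g2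
      · have hc1 : c₂ = α₁ ∨ c₂ = α₂ := by rw [← e1]; exact hi
        have hc2 : c₁ = β₁ ∨ c₁ = β₂ := by rw [← e2]; exact hj
        have := core α₁ α₂ β₁ β₂ c₂ c₁ d₂ d₁ key.1 key.2.1 key.2.2 hc1 hc2 g2 g1
        rwa [Finset.pair_comm d₂ d₁] at this
    rcases main with hm | hm
    · apply ha.2 e he
      rw [hAeq, heeq]
      exact hm
    · apply hb.2 e he
      rw [hBeq, heeq]
      exact hm
end

section
/- Let N ≥ 3 and let a = {α₁, α₂} and b = {β₁, β₂} be crossing diagonals of the N-gon. Let d be a diagonal of the polygon having one endpoint among {α₁, α₂} and the other endpoint among {β₁, β₂}. Then every diagonal of the polygon that crosses d must cross a or cross b. Consequently, for any set A of diagonals with a ∈ A and b ∈ A, the diagonal d belongs to nc(nc A). -/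
section Aux

lemma DiagAux.sub_val_eq {N : ℕ} [NeZero N] (u v : ZMod N) :
    (u - v).val = if v.val ≤ u.val then u.val - v.val else u.val + N - v.val := by
  split_ifs with h
  · have h2 : ((u.val - v.val : ℕ) : ZMod N) = u - v := by
      rw [Nat.cast_sub h]; simp [ZMod.natCast_val, ZMod.cast_id]
    rw [← h2, ZMod.val_cast_of_lt (lt_of_le_of_lt (Nat.sub_le _ _) (ZMod.val_lt u))]
  · have hv : v.val ≤ u.val + N := by have := ZMod.val_lt v; omega
    have h2 : ((u.val + N - v.val : ℕ) : ZMod N) = u - v := by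
      rw [Nat.cast_sub hv]; push_cast; simp [ZMod.natCast_val, ZMod.cast_id, ZMod.natCast_self]
    rw [← h2, ZMod.val_cast_of_lt (by have := ZMod.val_lt u; have := ZMod.val_lt v; omega)]

/-- Base-change for differences in `ZMod N`. -/
lemma DiagAux.key {N : ℕ} [NeZero N] (p u c : ZMod N) :
    (c - u).val = if (u - p).val ≤ (c - p).val then (c - p).val - (u - p).val
      else (c - p).val + N - (u - p).val := by
  have h : c - u = (c - p) - (u - p) := by ring
  rw [h, DiagAux.sub_val_eq]

open DiagAux in
lemma DiagAux.quad_of_cross {N : ℕ} [NeZero N] {a₁ a₂ b₁ b₂ : ZMod N}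
    (h1 : ArcBtw N a₁ b₁ a₂) (h2 : ArcBtw N a₂ b₂ a₁) : ArcBtw N a₁ a₂ b₂ := by
  obtain ⟨h1a, h1b⟩ := h1
  obtain ⟨h2a, h2b⟩ := h2
  rw [key a₁ a₂ b₂] at h2a h2b
  rw [key a₁ a₂ a₁] at h2b
  have v1 := ZMod.val_lt (b₁ - a₁); have v2 := ZMod.val_lt (a₂ - a₁)
  have v3 := ZMod.val_lt (b₂ - a₁)
  simp only [sub_self, ZMod.val_zero] at h2b
  constructor <;> split_ifs at h2a h2b <;> omega

open DiagAux in
lemma DiagAux.quad_rot {N : ℕ} [NeZero N] {q₀ q₁ q₂ q₃ : ZMod N}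
    (h01 : ArcBtw N q₀ q₁ q₂) (h02 : ArcBtw N q₀ q₂ q₃) :
    ArcBtw N q₁ q₂ q₃ ∧ ArcBtw N q₁ q₃ q₀ := by
  obtain ⟨a1, a2⟩ := h01
  obtain ⟨b1, b2⟩ := h02
  have v1 := ZMod.val_lt (q₁ - q₀); have v2 := ZMod.val_lt (q₂ - q₀)
  have v3 := ZMod.val_lt (q₃ - q₀)
  constructor
  · show 0 < (q₂ - q₁).val ∧ (q₂ - q₁).val < (q₃ - q₁).val
    rw [key q₀ q₁ q₂, key q₀ q₁ q₃]
    split_ifs <;> omega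
  · show 0 < (q₃ - q₁).val ∧ (q₃ - q₁).val < (q₀ - q₁).val
    rw [key q₀ q₁ q₃, key q₀ q₁ q₀]
    simp only [sub_self, ZMod.val_zero]
    split_ifs <;> omega

open DiagAux in
/-- Master lemma: if `q₀ q₁ q₂ q₃` is a cyclic quadruple and `{x,y}` separates
`q₀` from `q₁`, then it separates `q₀` from `q₂` or `q₁` from `q₃`. -/
lemma DiagAux.master {N : ℕ} [NeZero N] {q₀ q₁ q₂ q₃ x y : ZMod N}
    (h01 : ArcBtw N q₀ q₁ q₂) (h02 : ArcBtw N q₀ q₂ q₃)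
    (hx : ArcBtw N x q₀ y) (hy : ArcBtw N y q₁ x) :
    (ArcBtw N x q₀ y ∧ ArcBtw N y q₂ x) ∨ (ArcBtw N y q₁ x ∧ ArcBtw N x q₃ y) := by
  obtain ⟨a1, a2⟩ := h01
  obtain ⟨b1, b2⟩ := h02
  have v1 := ZMod.val_lt (q₁ - q₀); have v2 := ZMod.val_lt (q₂ - q₀)
  have v3 := ZMod.val_lt (q₃ - q₀)
  have vx := ZMod.val_lt (x - q₀); have vy := ZMod.val_lt (y - q₀)
  have hx' : 0 < (y - q₀).val ∧ (y - q₀).val < (x - q₀).val := by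
    obtain ⟨c1, c2⟩ := hx
    rw [key q₀ x q₀] at c1 c2
    rw [key q₀ x y] at c2
    simp only [sub_self, ZMod.val_zero] at c1 c2
    split_ifs at c1 c2 <;> omega
  have hy' : (y - q₀).val < (q₁ - q₀).val ∧ (q₁ - q₀).val < (x - q₀).val := by
    obtain ⟨c1, c2⟩ := hy
    rw [key q₀ y q₁] at c1 c2
    rw [key q₀ y x] at c2
    split_ifs at c1 c2 <;> omega
  by_cases hc : (q₂ - q₀).val < (x - q₀).val
  · left
    refine ⟨hx, ?_, ?_⟩ <;> rw [key q₀ y q₂] <;> try rw [key q₀ y x]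
    all_goals split_ifs <;> omega
  · right
    refine ⟨hy, ?_, ?_⟩ <;> rw [key q₀ x q₃] <;> try rw [key q₀ x y]
    all_goals split_ifs <;> omega

lemma DiagAux.pair_eq {α : Type*} [DecidableEq α] {r s u v : α} (huv : u ≠ v)
    (h : ({r, s} : Finset α) = {u, v}) : (r = u ∧ s = v) ∨ (r = v ∧ s = u) := by
  have hr : r ∈ ({u, v} : Finset α) := h ▸ Finset.mem_insert_self _ _
  have hs : s ∈ ({u, v} : Finset α) := h ▸ (by simp)
  have hu : u ∈ ({r, s} : Finset α) := h.symm ▸ Finset.mem_insert_self _ _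
  have hv : v ∈ ({r, s} : Finset α) := h.symm ▸ (by simp)
  simp only [Finset.mem_insert, Finset.mem_singleton] at hr hs hu hv
  rcases hr with rfl | rfl <;> rcases hs with rfl | rfl <;> tauto

open DiagAux in
/-- A diagonal crossing `{q₀,q₁}` (as first argument) crosses `{q₀,q₂}` or `{q₁,q₃}`. -/
lemma DiagAux.crossStep {N : ℕ} [NeZero N] {q₀ q₁ q₂ q₃ : ZMod N} {e : Finset (ZMod N)}
    (h01 : ArcBtw N q₀ q₁ q₂) (h02 : ArcBtw N q₀ q₂ q₃)
    (hC : Cross N e {q₀, q₁}) :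
    Cross N e {q₀, q₂} ∨ Cross N e {q₁, q₃} := by
  have hne : q₀ ≠ q₁ := by
    intro h
    obtain ⟨c1, c2⟩ := h01
    rw [h, sub_self, ZMod.val_zero] at c1
    omega
  obtain ⟨c₁, c₂, d₁, d₂, hE, hD, g1, g2⟩ := hC
  rcases pair_eq hne hD.symm with ⟨e1, e2⟩ | ⟨e1, e2⟩ <;> rw [e1] at g1 <;> rw [e2] at g2
  · rcases master h01 h02 g1 g2 with ⟨hA, hB⟩ | ⟨hA, hB⟩
    · exact Or.inl ⟨c₁, c₂, q₀, q₂, hE, rfl, hA, hB⟩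
    · exact Or.inr ⟨c₂, c₁, q₁, q₃, hE.trans (Finset.pair_comm c₁ c₂), rfl, hA, hB⟩
  · rcases master h01 h02 g2 g1 with ⟨hA, hB⟩ | ⟨hA, hB⟩
    · exact Or.inl ⟨c₂, c₁, q₀, q₂, hE.trans (Finset.pair_comm c₁ c₂), rfl, hA, hB⟩
    · exact Or.inr ⟨c₁, c₂, q₁, q₃, hE, rfl, hA, hB⟩

open DiagAux in
lemma DiagAux.cross_symm {N : ℕ} [NeZero N] {d e : Finset (ZMod N)}
    (h : Cross N d e) : Cross N e d := by
  obtain ⟨a₁, a₂, b₁, b₂, hd, he, h1, h2⟩ := h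
  have h02 := quad_of_cross h1 h2
  have R2 := quad_rot h1 h02
  have R3 := quad_rot R2.1 R2.2
  have R4 := quad_rot R3.1 R3.2
  exact ⟨b₁, b₂, a₂, a₁, he, hd.trans (Finset.pair_comm a₁ a₂), R2.1, R4.1⟩

end Aux

open DiagAux in
/-- Let `a = {α₁, α₂}` and `b = {β₁, β₂}` be crossing diagonals of the `N`-gon
(`N ≥ 3`) and let `d` be a diagonal with one endpoint among `{α₁, α₂}` and the other
among `{β₁, β₂}`. Then every diagonal crossing `d` crosses `a` or `b`; consequently,
for any set `A` of diagonals containing `a` and `b`, we have `d ∈ nc (nc A)`. -/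
theorem diagonal_in_nc_nc {N : ℕ} (hN : 3 ≤ N) (α₁ α₂ β₁ β₂ : ZMod N)
    (ha : IsDiag N {α₁, α₂}) (hb : IsDiag N {β₁, β₂})
    (hcross : Cross N {α₁, α₂} {β₁, β₂})
    (d : Finset (ZMod N)) (hd : IsDiag N d)
    (hde : ∃ i ∈ ({α₁, α₂} : Finset (ZMod N)),
      ∃ j ∈ ({β₁, β₂} : Finset (ZMod N)), d = {i, j}) :
    (∀ e : Finset (ZMod N), IsDiag N e → Cross N e d →
        Cross N e {α₁, α₂} ∨ Cross N e {β₁, β₂}) ∧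
      (∀ A : Set (Finset (ZMod N)),
        ({α₁, α₂} : Finset (ZMod N)) ∈ A → ({β₁, β₂} : Finset (ZMod N)) ∈ A →
        d ∈ nc N (nc N A)) := by
  haveI : NeZero N := ⟨by omega⟩
  obtain ⟨a₁, a₂, b₁, b₂, hA, hB, h1, h2⟩ := hcross
  rw [hA, hB] at hde ⊢
  have h02 := quad_of_cross h1 h2
  have R2 := quad_rot h1 h02
  have R3 := quad_rot R2.1 R2.2
  have R4 := quad_rot R3.1 R3.2
  have main : ∀ e : Finset (ZMod N), Cross N e d →
      Cross N e {a₁, a₂} ∨ Cross N e {b₁, b₂} := by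
    intro e hce
    obtain ⟨i, hi, j, hj, hdij⟩ := hde
    simp only [Finset.mem_insert, Finset.mem_singleton] at hi hj
    rcases hi with hi | hi <;> rcases hj with hj | hj <;>
      rw [hi, hj] at hdij <;> rw [hdij] at hce
    · exact crossStep h1 h02 hce
    · -- d = {a₁, b₂}; quadruple (b₂, a₁, b₁, a₂) = R4
      rw [Finset.pair_comm a₁ b₂] at hce
      rcases crossStep R4.1 R4.2 hce with h | h
      · right; rwa [Finset.pair_comm b₁ b₂]
      · left; exact h
    · -- d = {a₂, b₁}; quadruple (b₁, a₂, b₂, a₁) = R2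
      rw [Finset.pair_comm a₂ b₁] at hce
      rcases crossStep R2.1 R2.2 hce with h | h
      · right; exact h
      · left; rwa [Finset.pair_comm a₁ a₂]
    · -- d = {a₂, b₂}; quadruple (a₂, b₂, a₁, b₁) = R3
      rcases crossStep R3.1 R3.2 hce with h | h
      · left; rwa [Finset.pair_comm a₁ a₂]
      · right; rwa [Finset.pair_comm b₁ b₂]
  refine ⟨fun e _ hce => main e hce, fun A haA hbA => ⟨hd, fun e he hC => ?_⟩⟩
  rcases main e (cross_symm hC) with h | h
  · exact he.2 _ haA h
  · exact he.2 _ hbA h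
end
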